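/- Fix a ∈ ℝ, b, c ∈ ℂ with c ≠ 0, and E ∈ ℝ. Then every solution ψ of the half-line eigenvalue equation (not assumed ℓ²) is determined as follows: there exist complex numbers z, w such that ψ(1) = z·(c̄, −(a − E), b, 0) + w·(0, −b̄, −(a + E), c̄), and ψ(n+1) = R·ψ(n) for every n ≥ 1, where R is the 4×4 complex matrix R = [[c, −(a+E), b̄, 0], [−c(a−E)/c̄, (a² + |b|² + 1 − E²)/c̄, 0, −b̄c/c̄], [bc/c̄, 0, (a² + |b|² + 1 − E²)/c̄, −(a+E)c/c̄], [0, −b, −(a−E), c]]. -/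

import Mathlib

/-
The half-line equation is the three-term equation `A ψ(n-1) + (V - E) ψ(n) + A* ψ(n+1) = 0`
at every site `n ≥ 1`, with `ψ(0) = 0`. The equations at two consecutive sites determine
`ψ(n+1)` from `ψ(n)` alone, through `R`. At the first site, `ψ(0) = 0` turns rows 1 and 4 into
two linear conditions on `ψ(1)`, which leave the two-parameter family of initial values.
-/

noncomputable section

open scoped ComplexConjugate

/-- The on-site matrix `V` of the local model. -/
def Vmat (a : ℝ) (b c : ℂ) : Matrix (Fin 4) (Fin 4) ℂ :=
  !![(a : ℂ), conj c, 0, conj b;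
     c, -(a : ℂ), conj b, 0;
     0, b, (a : ℂ), -c;
     b, 0, -(conj c), -(a : ℂ)]

/-- The hopping matrix `A` of the local model. -/
def Amat : Matrix (Fin 4) (Fin 4) ℂ :=
  !![0, -1, 0, 0;
     0, 0, 0, 0;
     0, 0, 0, 0;
     0, 0, 1, 0]

/-- `ψ : ℕ → (Fin 4 → ℂ)` (with `ψ n` standing for the value at the site `n + 1` of the
half-line `{1, 2, 3, …}`) solves the half-line eigenvalue equation `(H♯ − E)ψ = 0`:
`(V − E·I)ψ(1) + A*ψ(2) = 0` and `Aψ(n) + (V − E·I)ψ(n+1) + A*ψ(n+2) = 0` for all `n ≥ 1`. -/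
def IsSolSeq (a : ℝ) (b c : ℂ) (E : ℝ) (ψ : ℕ → Fin 4 → ℂ) : Prop :=
  (Vmat a b c - (E : ℂ) • 1).mulVec (ψ 0) + (Amat.conjTranspose).mulVec (ψ 1) = 0 ∧
    ∀ n : ℕ,
      Amat.mulVec (ψ n) + (Vmat a b c - (E : ℂ) • 1).mulVec (ψ (n + 1)) +
        (Amat.conjTranspose).mulVec (ψ (n + 2)) = 0

/-- The `ℓ²` condition: `∑_{n ≥ 1} ‖ψ(n)‖² < ∞`. -/
def IsL2Seq (ψ : ℕ → Fin 4 → ℂ) : Prop :=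
  Summable fun n => ∑ i, ‖ψ n i‖ ^ 2

/-- The space `Sol(a, b, c, E)` of `ℓ²`-solutions of the half-line eigenvalue equation. -/
def Sol (a : ℝ) (b c : ℂ) (E : ℝ) : Set (ℕ → Fin 4 → ℂ) :=
  {ψ | IsSolSeq a b c E ψ ∧ IsL2Seq ψ}

/-- The sequence `e₁` with `e₁(n) = (c^{n−1}, 0, 0, 0)` (convention `0⁰ = 1`). -/
def eSeq₁ (c : ℂ) : ℕ → Fin 4 → ℂ := fun n => ![c ^ n, 0, 0, 0]

/-- The sequence `e₄` with `e₄(n) = (0, 0, 0, c^{n−1})` (convention `0⁰ = 1`). -/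
def eSeq₄ (c : ℂ) : ℕ → Fin 4 → ℂ := fun n => ![0, 0, 0, c ^ n]

/-- The transfer matrix `R` of the local model (for `c ≠ 0`). -/
def Rmat (a : ℝ) (b c : ℂ) (E : ℝ) : Matrix (Fin 4) (Fin 4) ℂ :=
  !![c, -((a : ℂ) + (E : ℂ)), conj b, 0;
     -(c * ((a : ℂ) - (E : ℂ))) / conj c,
       ((a ^ 2 + ‖b‖ ^ 2 + 1 - E ^ 2 : ℝ) : ℂ) / conj c, 0, -(conj b * c) / conj c;
     b * c / conj c, 0, ((a ^ 2 + ‖b‖ ^ 2 + 1 - E ^ 2 : ℝ) : ℂ) / conj c,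
       -(((a : ℂ) + (E : ℂ)) * c) / conj c;
     0, -b, -((a : ℂ) - (E : ℂ)), c]

open Matrix

lemma Amat_mulVec (v : Fin 4 → ℂ) : Amat *ᵥ v = ![-v 1, 0, 0, v 2] := by
  ext i
  fin_cases i <;> simp [Amat, mulVec, dotProduct, Fin.sum_univ_four]

lemma Amat_conjTranspose_mulVec (v : Fin 4 → ℂ) : Amatᴴ *ᵥ v = ![0, -v 0, v 3, 0] := by
  ext i
  fin_cases i <;> simp [Amat, mulVec, dotProduct, Fin.sum_univ_four, conjTranspose_apply]

lemma Vmat_sub_smul_one_mulVec (a : ℝ) (b c : ℂ) (E : ℝ) (v : Fin 4 → ℂ) :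
    (Vmat a b c - (E : ℂ) • 1) *ᵥ v =
      ![((a : ℂ) - E) * v 0 + conj c * v 1 + conj b * v 3,
        c * v 0 - ((a : ℂ) + E) * v 1 + conj b * v 2,
        b * v 1 + ((a : ℂ) - E) * v 2 - c * v 3,
        b * v 0 - conj c * v 2 - ((a : ℂ) + E) * v 3] := by
  ext i
  fin_cases i <;> simp [Vmat, mulVec, dotProduct, Fin.sum_univ_four, one_apply] <;> ring

section SiteEq

variable {a : ℝ} {b c : ℂ} {E : ℝ}

def SiteEq (a : ℝ) (b c : ℂ) (E : ℝ) (u v w : Fin 4 → ℂ) : Prop :=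
  Amat *ᵥ u + (Vmat a b c - (E : ℂ) • 1) *ᵥ v + Amatᴴ *ᵥ w = 0

lemma siteEq_iff (u v w : Fin 4 → ℂ) :
    SiteEq a b c E u v w ↔
      -u 1 + ((a : ℂ) - E) * v 0 + conj c * v 1 + conj b * v 3 = 0 ∧
      c * v 0 - ((a : ℂ) + E) * v 1 + conj b * v 2 - w 0 = 0 ∧
      b * v 1 + ((a : ℂ) - E) * v 2 - c * v 3 + w 3 = 0 ∧
      u 2 + b * v 0 - conj c * v 2 - ((a : ℂ) + E) * v 3 = 0 := by
  rw [SiteEq, Amat_mulVec, Vmat_sub_smul_one_mulVec, Amat_conjTranspose_mulVec, funext_iff]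
  simp [Fin.forall_fin_succ, sub_eq_add_neg, add_assoc]

lemma Rmat_mulVec_eq (hc : c ≠ 0) {v w : Fin 4 → ℂ}
    (h₀ : w 0 = c * v 0 - ((a : ℂ) + E) * v 1 + conj b * v 2)
    (h₁ : conj c * w 1 = -(c * ((a : ℂ) - E)) * v 0
      + ((a : ℂ) ^ 2 + b * conj b + 1 - (E : ℂ) ^ 2) * v 1 - conj b * c * v 3)
    (h₂ : conj c * w 2 = b * c * v 0
      + ((a : ℂ) ^ 2 + b * conj b + 1 - (E : ℂ) ^ 2) * v 2 - ((a : ℂ) + E) * c * v 3)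
    (h₃ : w 3 = -b * v 1 - ((a : ℂ) - E) * v 2 + c * v 3) :
    Rmat a b c E *ᵥ v = w := by
  have hc' : conj c ≠ 0 := (map_ne_zero _).2 hc
  have hK : ((a ^ 2 + ‖b‖ ^ 2 + 1 - E ^ 2 : ℝ) : ℂ) =
      (a : ℂ) ^ 2 + b * conj b + 1 - (E : ℂ) ^ 2 := by
    push_cast
    rw [← Complex.mul_conj']
  ext i
  fin_cases i <;>
    simp only [Fin.isValue, Fin.zero_eta, Fin.mk_one, Fin.reduceFinMk, Rmat, hK, mulVec,
      dotProduct, Fin.sum_univ_four, of_apply, cons_val', cons_val_fin_one, cons_val_zero,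
      cons_val_one, cons_val] <;>
    field_simp
  · linear_combination -h₀
  · linear_combination -h₁
  · linear_combination -h₂
  · linear_combination -h₃

/-- Since the middle rows of `A` vanish, rows 2 and 3 of the equation at `v` give the outer
components of `w`; rows 1 and 4 of the equation at `w`, times `c̄`, then give its middle ones. -/
lemma Rmat_mulVec_of_siteEq (hc : c ≠ 0) {u v w x : Fin 4 → ℂ}
    (h₁ : SiteEq a b c E u v w) (h₂ : SiteEq a b c E v w x) :
    w = Rmat a b c E *ᵥ v := by
  obtain ⟨-, h₁₁, h₁₂, -⟩ := (siteEq_iff u v w).1 h₁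
  obtain ⟨h₂₀, -, -, h₂₃⟩ := (siteEq_iff v w x).1 h₂
  refine (Rmat_mulVec_eq hc ?_ ?_ ?_ ?_).symm
  · linear_combination -h₁₁
  · linear_combination h₂₀ + ((a : ℂ) - E) * h₁₁ - conj b * h₁₂
  · linear_combination -h₂₃ - b * h₁₁ - ((a : ℂ) + E) * h₁₂
  · linear_combination h₁₂

lemma exists_eq_smul_add_smul_of_siteEq_zero (hc : c ≠ 0) {v w : Fin 4 → ℂ}
    (h : SiteEq a b c E 0 v w) :
    ∃ z w : ℂ, v = z • ![conj c, -((a : ℂ) - (E : ℂ)), b, 0] +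
      w • ![0, -(conj b), -((a : ℂ) + (E : ℂ)), conj c] := by
  have hc' : conj c ≠ 0 := (map_ne_zero _).2 hc
  obtain ⟨h₀, -, -, h₃⟩ := (siteEq_iff 0 v w).1 h
  simp only [Pi.zero_apply, neg_zero, zero_add] at h₀ h₃
  refine ⟨v 0 / conj c, v 3 / conj c, ?_⟩
  ext i
  fin_cases i <;>
    simp only [Fin.isValue, Fin.zero_eta, Fin.mk_one, Fin.reduceFinMk, Pi.add_apply,
      Pi.smul_apply, smul_eq_mul, cons_val_zero, cons_val_one, cons_val, mul_zero, zero_add, add_zero] <;>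
    field_simp
  · linear_combination h₀
  · linear_combination -h₃

namespace IsSolSeq

variable {ψ : ℕ → Fin 4 → ℂ} (hψ : IsSolSeq a b c E ψ)
include hψ

lemma siteEq_zero : SiteEq a b c E 0 (ψ 0) (ψ 1) := by
  rw [SiteEq, mulVec_zero, zero_add]
  exact hψ.1

lemma exists_siteEq (n : ℕ) : ∃ u, SiteEq a b c E u (ψ n) (ψ (n + 1)) := by
  cases n with
  | zero => exact ⟨0, hψ.siteEq_zero⟩
  | succ n => exact ⟨ψ n, hψ.2 n⟩

end IsSolSeq

end SiteEq

/-- Fix `a ∈ ℝ`, `b, c ∈ ℂ` with `c ≠ 0`, and `E ∈ ℝ`. Then every solution `ψ` of the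
half-line eigenvalue equation (not assumed ℓ²) is determined as follows: there exist complex
numbers `z, w` such that `ψ(1) = z·(c̄, −(a−E), b, 0) + w·(0, −b̄, −(a+E), c̄)`, and
`ψ(n+1) = R·ψ(n)` for every `n ≥ 1`. -/
theorem stmt9 (a : ℝ) (b c : ℂ) (hc : c ≠ 0) (E : ℝ)
    (ψ : ℕ → Fin 4 → ℂ) (hψ : IsSolSeq a b c E ψ) :
    ∃ z w : ℂ,
      ψ 0 = z • ![conj c, -((a : ℂ) - (E : ℂ)), b, 0] +
          w • ![0, -(conj b), -((a : ℂ) + (E : ℂ)), conj c] ∧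
      ∀ n : ℕ, ψ (n + 1) = (Rmat a b c E).mulVec (ψ n) := by
  obtain ⟨z, w, h₀⟩ := exists_eq_smul_add_smul_of_siteEq_zero hc hψ.siteEq_zero
  refine ⟨z, w, h₀, fun n => ?_⟩
  obtain ⟨u, hu⟩ := hψ.exists_siteEq n
  exact Rmat_mulVec_of_siteEq hc hu (hψ.2 n)
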